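/- Let I be a set of cardinality at least λ, B a complete Boolean algebra, h : P(I) → B a surjective Boolean algebra homomorphism such that D = h⁻¹({1_B}) is a λ-regular filter on I, and E a θ-complete ultrafilter on B with θ > ℵ₀; let Fil(h, E) = {A ⊆ I : h(A) ∈ E}. Suppose δ is a regular cardinal and ⟨f_α : α < δ⟩ is a sequence of D-nonstandard functions I → ℕ such that α < β < δ implies f_β <_D f_α, and every D-nonstandard f : I → ℕ satisfies f_α <_D f for some α < δ. Then ⟨f_α : α < δ⟩ is <_{Fil(h,E)}-decreasing, every Fil(h, E)-nonstandard g : I → ℕ satisfies f_α ≤_{Fil(h,E)} g for some α < δ, and lcf(ℵ₀, Fil(h, E)) = δ. -/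

import Mathlib

open Cardinal Set

universe u

/-- `A = ∅ mod D`: the complement of `A` belongs to the filter `D`. -/
def ZeroMod {I : Type u} (D : Filter I) (A : Set I) : Prop := Aᶜ ∈ D

/-- `A ≠ ∅ mod D`: the complement of `A` does not belong to the filter `D`. -/
def NonzeroMod {I : Type u} (D : Filter I) (A : Set I) : Prop := Aᶜ ∉ D

/-- `A ⊆ B mod D`. -/
def SubsetMod {I : Type u} (D : Filter I) (A B : Set I) : Prop := ZeroMod D (A \ B)

/-- `A = B mod D`. -/
def EqMod {I : Type u} (D : Filter I) (A B : Set I) : Prop := SubsetMod D A B ∧ SubsetMod D B A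

/-- `D` is a `lam`-regular filter on `I`: there is a family `⟨X i : i < lam⟩` of members of `D`
such that every `t ∈ I` belongs to only finitely many of the `X i`. -/
def IsRegularFilter {I : Type u} (lam : Cardinal.{u}) (D : Filter I) : Prop :=
  ∃ X : Ordinal.{u} → Set I, (∀ i, i < lam.ord → X i ∈ D) ∧
    ∀ t : I, {i : Ordinal.{u} | i < lam.ord ∧ t ∈ X i}.Finite

/-- `f : I → ℕ` is `D`-nonstandard. -/
def IsNonstandard {I : Type u} (D : Filter I) (f : I → ℕ) : Prop := ∀ n : ℕ, {t | n < f t} ∈ D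

/-- `f <_D g`. -/
def ltD {I : Type u} (D : Filter I) (f g : I → ℕ) : Prop := {t | f t < g t} ∈ D

/-- `f ≤_D g`. -/
def leD {I : Type u} (D : Filter I) (f g : I → ℕ) : Prop := {t | f t ≤ g t} ∈ D

/-- Flexibility for a family of sets (e.g. `D.sets`): for every nonstandard `f` there is a
`theta`-indexed family of members below `f`. -/
def IsFlexibleSets {I : Type u} (theta : Cardinal.{u}) (F : Set (Set I)) : Prop :=
  ∀ f : I → ℕ, (∀ n : ℕ, {t | n < f t} ∈ F) →
    ∃ X : Ordinal.{u} → Set I, (∀ α, α < theta.ord → X α ∈ F) ∧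
      ∀ t : I, #{α : Ordinal.{u} // α < theta.ord ∧ t ∈ X α} ≤ (f t : Cardinal)

/-- `D` is a `theta`-flexible filter. -/
def IsFlexible {I : Type u} (theta : Cardinal.{u}) (D : Filter I) : Prop :=
  IsFlexibleSets theta D.sets

/-- `F` (e.g. the sets of a filter) is `mu⁺`-good: every monotonic map from finite subsets of `mu`
into `F` has a multiplicative refinement. Finite subsets of `mu` are represented as finite sets of
ordinals `< mu.ord`. -/
def IsGoodSets {I : Type u} (mu : Cardinal.{u}) (F : Set (Set I)) : Prop :=
  ∀ f : Finset Ordinal.{u} → Set I,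
    (∀ u : Finset Ordinal.{u}, ↑u ⊆ Set.Iio mu.ord → f u ∈ F) →
    (∀ u v : Finset Ordinal.{u}, ↑v ⊆ Set.Iio mu.ord → u ⊆ v → f v ⊆ f u) →
    ∃ f' : Finset Ordinal.{u} → Set I,
      (∀ u, ↑u ⊆ Set.Iio mu.ord → f' u ∈ F) ∧
      (∀ u, ↑u ⊆ Set.Iio mu.ord → f' u ⊆ f u) ∧
      ∀ u v, ↑u ⊆ Set.Iio mu.ord → ↑v ⊆ Set.Iio mu.ord → f' u ∩ f' v = f' (u ∪ v)

/-- The filter `D` is `mu⁺`-good. -/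
def IsGoodFilter {I : Type u} (mu : Cardinal.{u}) (D : Filter I) : Prop := IsGoodSets mu D.sets

/-- An element of `FIN(G)`: a function whose domain is a finite subset of `G`, with
`h(g) ∈ range(g)` for each `g` in the domain. Functions in `G` take ordinal values. -/
structure PartialAssignment (I : Type u) (G : Set (I → Ordinal.{u})) where
  dom : Finset (I → Ordinal.{u})
  dom_sub : ↑dom ⊆ G
  val : (I → Ordinal.{u}) → Ordinal.{u}
  val_mem : ∀ g ∈ dom, val g ∈ Set.range g

/-- The set `A_h = {t ∈ I : g(t) = h(g) for all g ∈ dom h}`. -/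
def PartialAssignment.Aset {I : Type u} {G : Set (I → Ordinal.{u})}
    (h : PartialAssignment I G) : Set I :=
  {t | ∀ g ∈ h.dom, g t = h.val g}

/-- `G` is independent mod `D`: `A_h ≠ ∅ mod D` for every `h ∈ FIN(G)`. -/
def IndependentMod {I : Type u} (D : Filter I) (G : Set (I → Ordinal.{u})) : Prop :=
  ∀ h : PartialAssignment I G, NonzeroMod D h.Aset

/-- `(I, D, G)` is a `(lam, mu)`-pre-good triple: `|I| = lam`, `D` is a `lam`-regular filter,
`G` is a family of functions from `I` to `mu` (ordinals `< mu.ord`), independent mod `D`. -/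
def IsPreGoodTriple {I : Type u} (lam mu : Cardinal.{u}) (D : Filter I)
    (G : Set (I → Ordinal.{u})) : Prop :=
  #I = lam ∧ IsRegularFilter lam D ∧ (∀ g ∈ G, ∀ t : I, g t < mu.ord) ∧ IndependentMod D G

/-- `(I, D, G)` is a `(lam, mu)`-good triple: pre-good and `D` maximal among filters modulo which
`G` is independent. -/
def IsGoodTriple {I : Type u} (lam mu : Cardinal.{u}) (D : Filter I)
    (G : Set (I → Ordinal.{u})) : Prop :=
  IsPreGoodTriple lam mu D G ∧
    ∀ D' : Filter I, (∀ A ∈ D, A ∈ D') → IndependentMod D' G → D' = D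

/-- `A` is supported by `G` mod `D`: there is a partition of `I` into sets of the form `A_h`,
`h ∈ FIN(G)`, each of which is `⊆ A mod D` or disjoint from `A mod D`. -/
def SupportedBy {I : Type u} (D : Filter I) (G : Set (I → Ordinal.{u})) (A : Set I) : Prop :=
  ∃ P : Set (Set I),
    (∀ X ∈ P, ∃ h : PartialAssignment I G, X = h.Aset) ∧
    (∀ X ∈ P, ∀ Y ∈ P, X ≠ Y → X ∩ Y = ∅) ∧
    ⋃₀ P = Set.univ ∧
    ∀ X ∈ P, SubsetMod D X A ∨ ZeroMod D (X ∩ A)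

/-- `R` is the edge relation of a model of the random graph with vertex set `mu`
(identified with the ordinals `< mu.ord`). -/
def IsRandomGraphOn (mu : Cardinal.{u}) (R : Ordinal.{u} → Ordinal.{u} → Prop) : Prop :=
  (∀ a b, a < mu.ord → b < mu.ord → (R a b ↔ R b a)) ∧
  (∀ a, a < mu.ord → ¬ R a a) ∧
  ∀ U V : Finset Ordinal.{u}, ↑U ⊆ Set.Iio mu.ord → ↑V ⊆ Set.Iio mu.ord → Disjoint U V →
    ∃ x, x < mu.ord ∧ (∀ a ∈ U, R x a) ∧ ∀ b ∈ V, ¬ R x b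

/-- An ordinal `γ = β + n` (`β` limit or zero, `n < ω`) is even iff `n` is even,
equivalently iff `γ = 2·δ` for some ordinal `δ`. -/
def EvenOrdinal (γ : Ordinal.{u}) : Prop := ∃ δ : Ordinal.{u}, γ = 2 * δ

/-- `lcf(ℵ₀, D)`: the least cardinality of a family `S` of `D`-nonstandard functions
such that every `D`-nonstandard `g` satisfies `f ≤_D g` for some `f ∈ S`. -/
noncomputable def lcfAleph0 {I : Type u} (D : Filter I) : Cardinal.{u} :=
  sInf { c : Cardinal.{u} | ∃ S : Set (I → ℕ), #S = c ∧ (∀ f ∈ S, IsNonstandard D f) ∧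
    ∀ g : I → ℕ, IsNonstandard D g → ∃ f ∈ S, leD D f g }

/-- A filter on a Boolean algebra. -/
def IsBAFilter {B : Type u} [BooleanAlgebra B] (E : Set B) : Prop :=
  ⊤ ∈ E ∧ (∀ a b : B, a ∈ E → a ≤ b → b ∈ E) ∧ ∀ a b : B, a ∈ E → b ∈ E → a ⊓ b ∈ E

/-- An ultrafilter on a Boolean algebra: a maximal proper filter. -/
def IsBAUltrafilter {B : Type u} [BooleanAlgebra B] (E : Set B) : Prop :=
  IsBAFilter E ∧ ⊥ ∉ E ∧ ∀ E' : Set B, IsBAFilter E' → ⊥ ∉ E' → E ⊆ E' → E' = E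

/-- `E` is a `theta`-complete subset of the complete Boolean algebra `B`: every subset of `E`
of cardinality `< theta` has its infimum in `E`. -/
def IsThetaComplete {B : Type u} [CompleteBooleanAlgebra B] (theta : Cardinal.{u})
    (E : Set B) : Prop :=
  ∀ S : Set B, S ⊆ E → #S < theta → sInf S ∈ E

/-- `X ⊆ B` is `rho⁺`-good: every monotonic `fss(rho)`-indexed sequence of members of `X`
has a multiplicative refinement in `X`. -/
def IsGoodBA {B : Type u} [BooleanAlgebra B] (rho : Cardinal.{u}) (X : Set B) : Prop :=
  ∀ a : Finset Ordinal.{u} → B,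
    (∀ u, ↑u ⊆ Set.Iio rho.ord → a u ∈ X) →
    (∀ u v, ↑v ⊆ Set.Iio rho.ord → u ⊆ v → a v ≤ a u) →
    ∃ b : Ordinal.{u} → B, (∀ α, α < rho.ord → b α ∈ X) ∧
      ∀ u : Finset Ordinal.{u}, ↑u ⊆ Set.Iio rho.ord → u.inf b ≤ a u

/-- `kappa` is a measurable cardinal: uncountable, carrying a nonprincipal `kappa`-complete
ultrafilter. -/
def IsMeasurableCard (kappa : Cardinal.{u}) : Prop :=
  ℵ₀ < kappa ∧ ∃ (K : Type u) (U : Ultrafilter K), #K = kappa ∧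
    (∀ a : K, ({a} : Set K) ∉ U) ∧
    ∀ S : Set (Set K), (∀ A ∈ S, A ∈ U) → #S < kappa → ⋂₀ S ∈ U

/-- `kappa` is weakly compact: uncountable and every 2-coloring of pairs of ordinals `< kappa.ord`
has a homogeneous set of cardinality `kappa`. -/
def IsWeaklyCompactCard (kappa : Cardinal.{u}) : Prop :=
  ℵ₀ < kappa ∧ ∀ c : Ordinal.{u} → Ordinal.{u} → Bool,
    ∃ U : Set Ordinal.{u}, U ⊆ Set.Iio kappa.ord ∧ #U = Cardinal.lift.{u+1} kappa ∧
      ∃ v : Bool, ∀ ε ∈ U, ∀ ζ ∈ U, ε < ζ → c ε ζ = v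

/-!
Since `E` is countably complete, for a `Fil(h, E)`-nonstandard `g` the infimum of the values
`h {t | n < g t}` lies in `E`; choosing `A` with `h A` equal to it, the sets `{t ∈ A | g t ≤ n}` are
all `D`-null, so `g` agrees on `A ∈ Fil(h, E)` with a `D`-nonstandard function. Hence the
`D`-coinitial sequence `f` stays coinitial modulo `Fil(h, E) ⊇ D`, and regularity of `δ` gives
`lcf(ℵ₀, Fil(h, E)) = δ`: fewer than `δ` functions are all bounded below by a single `f γ`.
-/

section BooleanAlgebra

variable {B : Type u} [BooleanAlgebra B]

theorem IsBAUltrafilter.compl_mem_iff {E : Set B} (hE : IsBAUltrafilter E) (b : B) :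
    bᶜ ∈ E ↔ b ∉ E := by
  obtain ⟨⟨htop, hup, hinf⟩, hbot, hmax⟩ := hE
  refine ⟨fun hbc hb => hbot (by simpa using hinf _ _ hb hbc), fun hb => ?_⟩
  -- `E` together with `bᶜ` generates a proper filter, which by maximality is `E` itself.
  let E' : Set B := {x | ∃ e ∈ E, e ⊓ bᶜ ≤ x}
  have hE' : IsBAFilter E' := by
    refine ⟨⟨⊤, htop, le_top⟩, fun x y ⟨e, he, hex⟩ hxy => ⟨e, he, hex.trans hxy⟩, ?_⟩
    rintro x y ⟨e, he, hex⟩ ⟨e', he', hey⟩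
    exact ⟨e ⊓ e', hinf _ _ he he', inf_inf_distrib_right e e' bᶜ ▸ inf_le_inf hex hey⟩
  have hbot' : ⊥ ∉ E' := fun ⟨e, he, hle⟩ =>
    hb (hup e b he (disjoint_compl_right_iff.mp (disjoint_iff_inf_le.mpr hle)))
  rw [← hmax E' hE' hbot' fun e he => ⟨e, he, inf_le_left⟩]
  exact ⟨⊤, htop, by simp⟩

end BooleanAlgebra

theorem IsThetaComplete.iInf_mem {B : Type u} [CompleteBooleanAlgebra B] {theta : Cardinal.{u}}
    {E : Set B} (hE : IsThetaComplete theta E) (htheta : ℵ₀ < theta) {b : ℕ → B}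
    (hb : ∀ n, b n ∈ E) : ⨅ n, b n ∈ E :=
  hE _ (range_subset_iff.mpr hb)
    ((mk_le_aleph0_iff.mpr (countable_range b).to_subtype).trans_lt htheta)

section InducedUltrafilter

variable {I : Type u} {B : Type u} [BooleanAlgebra B] {h : Set I → B}

theorem map_empty_of_inf_compl (hinf : ∀ A C : Set I, h (A ∩ C) = h A ⊓ h C)
    (hcompl : ∀ A : Set I, h Aᶜ = (h A)ᶜ) : h ∅ = ⊥ := by
  rw [← inter_compl_self ∅, hinf, hcompl, inf_compl_eq_bot]

theorem monotone_of_map_inter (hinf : ∀ A C : Set I, h (A ∩ C) = h A ⊓ h C) : Monotone h :=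
  fun A C hAC => calc
    h A = h (A ∩ C) := by rw [inter_eq_left.mpr hAC]
    _ = h A ⊓ h C := hinf A C
    _ ≤ h C := inf_le_right

theorem exists_ultrafilter_mem_iff_map_mem (hinf : ∀ A C : Set I, h (A ∩ C) = h A ⊓ h C)
    (hcompl : ∀ A : Set I, h Aᶜ = (h A)ᶜ) {E : Set B} (hE : IsBAUltrafilter E) :
    ∃ U : Ultrafilter I, ∀ A : Set I, A ∈ U ↔ h A ∈ E := by
  let F : Filter I :=
    { sets := {A | h A ∈ E}
      univ_sets := by
        change h univ ∈ E
        rw [← compl_empty, hcompl, map_empty_of_inf_compl hinf hcompl, compl_bot]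
        exact hE.1.1
      sets_of_superset := fun hA hAC => hE.1.2.1 _ _ hA (monotone_of_map_inter hinf hAC)
      inter_sets := fun hA hC => by
        change h (_ ∩ _) ∈ E
        rw [hinf]
        exact hE.1.2.2 _ _ hA hC }
  refine ⟨.ofComplNotMemIff F fun A => ?_, fun A => Iff.rfl⟩
  change h Aᶜ ∉ E ↔ h A ∈ E
  rw [hcompl, ← hE.compl_mem_iff, compl_compl]

end InducedUltrafilter

theorem exists_nonstandard_eq_of_nonstandard {I : Type u} {B : Type u} [CompleteBooleanAlgebra B]
    {theta : Cardinal.{u}} {h : Set I → B} (hsurj : Function.Surjective h)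
    (hinf : ∀ A C : Set I, h (A ∩ C) = h A ⊓ h C) (hcompl : ∀ A : Set I, h Aᶜ = (h A)ᶜ)
    {D U : Filter I} (hD : ∀ A : Set I, A ∈ D ↔ h A = ⊤) {E : Set B}
    (hU : ∀ A : Set I, A ∈ U ↔ h A ∈ E) (htheta : ℵ₀ < theta) (hcomp : IsThetaComplete theta E)
    {f₀ : I → ℕ} (hf₀ : IsNonstandard D f₀) {g : I → ℕ} (hg : IsNonstandard U g) :
    ∃ g' : I → ℕ, IsNonstandard D g' ∧ {t | g' t = g t} ∈ U := by
  classical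
  obtain ⟨A, hA⟩ := hsurj (⨅ n, h {t | n < g t})
  have hAU : A ∈ U := (hU A).mpr (hA ▸ hcomp.iInf_mem htheta fun n => (hU _).mp (hg n))
  have hnull : ∀ n : ℕ, (A ∩ {t | n < g t}ᶜ)ᶜ ∈ D := fun n => by
    rw [hD, hcompl, hinf, hcompl, hA, compl_eq_top, ← le_bot_iff, ← disjoint_iff_inf_le,
      disjoint_compl_right_iff]
    exact iInf_le _ n
  refine ⟨A.piecewise g f₀, fun n => ?_,
    Filter.mem_of_superset hAU fun t ht => piecewise_eq_of_mem _ _ _ ht⟩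
  filter_upwards [hnull n, hf₀ n] with t htA htf
  by_cases ht : t ∈ A
  · simpa [ht] using htA
  · simpa [ht] using htf

section Lcf

variable {I : Type u} {U : Filter I}

theorem ltD_irrefl [U.NeBot] (g : I → ℕ) : ¬ ltD U g g := by
  simp [ltD]

theorem ltD.trans_leD {f g k : I → ℕ} (hfg : ltD U f g) (hgk : leD U g k) : ltD U f k := by
  filter_upwards [hfg, hgk] with t h₁ h₂ using h₁.trans_le h₂

variable {delta : Cardinal.{u}} {f : Ordinal.{u} → I → ℕ}

theorem le_mk_of_coinitial [U.NeBot] (hdreg : delta.IsRegular)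
    (hfns : ∀ α, α < delta.ord → IsNonstandard U (f α))
    (hdec : ∀ α β : Ordinal.{u}, α < β → β < delta.ord → ltD U (f β) (f α))
    (hcoin : ∀ g : I → ℕ, IsNonstandard U g → ∃ α, α < delta.ord ∧ leD U (f α) g)
    {T : Set (I → ℕ)} (hTns : ∀ s ∈ T, IsNonstandard U s)
    (hT : ∀ g : I → ℕ, IsNonstandard U g → ∃ s ∈ T, leD U s g) : delta ≤ #T := by
  by_contra! hlt
  choose a ha hle using fun s : T => hcoin s (hTns s s.2)
  have hγ : ⨆ s, a s + 1 < delta.ord :=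
    Ordinal.iSup_add_one_lt_of_lt_cof (by rwa [hdreg.cof_ord]) ha
  obtain ⟨s, hs, hsγ⟩ := hT _ (hfns _ hγ)
  have haγ : a ⟨s, hs⟩ < ⨆ s, a s + 1 :=
    (Order.lt_add_one_iff.mpr le_rfl).trans_le (Ordinal.le_iSup (fun s => a s + 1) ⟨s, hs⟩)
  exact ltD_irrefl _ (((hdec _ _ haγ hγ).trans_leD (hle ⟨s, hs⟩)).trans_leD hsγ)

theorem lcfAleph0_eq_of_coinitial [U.NeBot] (hdreg : delta.IsRegular)
    (hfns : ∀ α, α < delta.ord → IsNonstandard U (f α))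
    (hdec : ∀ α β : Ordinal.{u}, α < β → β < delta.ord → ltD U (f β) (f α))
    (hcoin : ∀ g : I → ℕ, IsNonstandard U g → ∃ α, α < delta.ord ∧ leD U (f α) g) :
    lcfAleph0 U = delta := by
  have hmem : #(f '' Iio delta.ord) ∈ {c : Cardinal.{u} | ∃ S : Set (I → ℕ), #S = c ∧
      (∀ g ∈ S, IsNonstandard U g) ∧ ∀ g, IsNonstandard U g → ∃ f' ∈ S, leD U f' g} := by
    refine ⟨_, rfl, ?_, fun g hg => ?_⟩
    · rintro _ ⟨α, hα, rfl⟩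
      exact hfns α hα
    · obtain ⟨α, hα, hle⟩ := hcoin g hg
      exact ⟨f α, mem_image_of_mem f hα, hle⟩
  refine le_antisymm ((csInf_le' hmem).trans ?_) (le_csInf ⟨_, hmem⟩ ?_)
  · simpa [Cardinal.mk_Iio_ordinal] using mk_image_le_lift (f := f) (s := Iio delta.ord)
  · rintro _ ⟨T, rfl, hTns, hT⟩
    exact le_mk_of_coinitial hdreg hfns hdec hcoin hTns hT

end Lcf

theorem induced_ultrafilter_lcf_general {I : Type u} {B : Type u} [CompleteBooleanAlgebra B]
    (theta delta : Cardinal.{u})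
    (h : Set I → B) (hsurj : Function.Surjective h)
    (hinf : ∀ A C : Set I, h (A ∩ C) = h A ⊓ h C)
    (hcompl : ∀ A : Set I, h Aᶜ = (h A)ᶜ)
    (D : Filter I) (hD : ∀ A : Set I, A ∈ D ↔ h A = ⊤)
    (E : Set B) (hE : IsBAUltrafilter E)
    (htheta : ℵ₀ < theta) (hcomp : IsThetaComplete theta E)
    (hdreg : delta.IsRegular)
    (f : Ordinal.{u} → I → ℕ)
    (hfns : ∀ α, α < delta.ord → IsNonstandard D (f α))
    (hdec : ∀ α β : Ordinal.{u}, α < β → β < delta.ord → ltD D (f β) (f α))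
    (hcoin : ∀ g : I → ℕ, IsNonstandard D g → ∃ α, α < delta.ord ∧ ltD D (f α) g) :
    ∃ U : Ultrafilter I, (∀ A : Set I, A ∈ U ↔ h A ∈ E) ∧
      (∀ α β : Ordinal.{u}, α < β → β < delta.ord → ltD (U : Filter I) (f β) (f α)) ∧
      (∀ g : I → ℕ, IsNonstandard (U : Filter I) g →
        ∃ α, α < delta.ord ∧ leD (U : Filter I) (f α) g) ∧
      lcfAleph0 (U : Filter I) = delta := by
  obtain ⟨U, hU⟩ := exists_ultrafilter_mem_iff_map_mem hinf hcompl hE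
  have hUD : (U : Filter I) ≤ D := fun A hA => (hU A).mpr (((hD A).mp hA).symm ▸ hE.1.1)
  have hcoinU : ∀ g : I → ℕ, IsNonstandard (U : Filter I) g →
      ∃ α, α < delta.ord ∧ leD (U : Filter I) (f α) g := fun g hg => by
    obtain ⟨g', hg'D, hg'g⟩ := exists_nonstandard_eq_of_nonstandard hsurj hinf hcompl hD hU
      htheta hcomp (hfns 0 hdreg.ord_pos) hg
    obtain ⟨α, hα, hlt⟩ := hcoin g' hg'D
    refine ⟨α, hα, ?_⟩
    filter_upwards [hUD hlt, hg'g] with t hlt' heq using heq ▸ hlt'.le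
  have hdecU := fun α β hαβ hβ => hUD (hdec α β hαβ hβ)
  exact ⟨U, hU, hdecU, hcoinU,
    lcfAleph0_eq_of_coinitial hdreg (fun α hα n => hUD (hfns α hα n)) hdecU hcoinU⟩

/-- with `E` `theta`-complete (`theta > ℵ₀`), a coinitial `delta`-sequence of
`D`-nonstandard functions stays coinitial among `Fil(h,E)`-nonstandard functions, and
`lcf(ℵ₀, Fil(h,E)) = delta`. -/
theorem induced_ultrafilter_lcf {I : Type u} {B : Type u} [CompleteBooleanAlgebra B]
    (lam theta delta : Cardinal.{u}) (hI : lam ≤ #I)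
    (h : Set I → B) (hsurj : Function.Surjective h)
    (hsup : ∀ A C : Set I, h (A ∪ C) = h A ⊔ h C)
    (hinf : ∀ A C : Set I, h (A ∩ C) = h A ⊓ h C)
    (hcompl : ∀ A : Set I, h Aᶜ = (h A)ᶜ)
    (htop : h Set.univ = ⊤) (hbot : h ∅ = ⊥)
    (D : Filter I) (hD : ∀ A : Set I, A ∈ D ↔ h A = ⊤)
    (hreg : IsRegularFilter lam D)
    (E : Set B) (hE : IsBAUltrafilter E)
    (htheta : ℵ₀ < theta) (hcomp : IsThetaComplete theta E)
    (hdreg : delta.IsRegular)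
    (f : Ordinal.{u} → I → ℕ)
    (hfns : ∀ α, α < delta.ord → IsNonstandard D (f α))
    (hdec : ∀ α β : Ordinal.{u}, α < β → β < delta.ord → ltD D (f β) (f α))
    (hcoin : ∀ g : I → ℕ, IsNonstandard D g → ∃ α, α < delta.ord ∧ ltD D (f α) g) :
    ∃ U : Ultrafilter I, (∀ A : Set I, A ∈ U ↔ h A ∈ E) ∧
      (∀ α β : Ordinal.{u}, α < β → β < delta.ord → ltD (U : Filter I) (f β) (f α)) ∧
      (∀ g : I → ℕ, IsNonstandard (U : Filter I) g →
        ∃ α, α < delta.ord ∧ leD (U : Filter I) (f α) g) ∧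
      lcfAleph0 (U : Filter I) = delta :=
  induced_ultrafilter_lcf_general theta delta h hsurj hinf hcompl D hD E hE htheta hcomp hdreg f
    hfns hdec hcoin
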